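/- Suppose Δu = f with u ∈ L²_a(X^{ℓ+1}) and f continuous, bounded, alternating, and in L² (with K ≡ 1, the whole-space theory). Then u is continuous and bounded; i.e. solutions of the Poisson equation with continuous right-hand side are continuous. -/

import Mathlib

/-!
For `K ≡ 1` the Laplacian on `(m+1)`-tuples is `Δu = (m+2)u - ∑ₐ Aₐu`, where `Aₐ`
integrates the `a`-th coordinate out against `μ`: the cross terms of `∂δ` and `δ∂`
cancel in pairs. So `Δu = f` reads `(m+2)u = f + ∑ₐ Aₐu`. Each `Aₐ` maps bounded
continuous functions to bounded continuous functions without increasing the sup distance,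
so `v ↦ (f + ∑ₐ Aₐv)/(m+2)` is a contraction with constant `(m+1)/(m+2)`, and its fixed
point `v` solves the equation. Each `Aₐ` also preserves the integral of `|w|`, so
`w = u - v` satisfies `(m+2)‖w‖₁ ≤ (m+1)‖w‖₁`, whence `u = v` a.e.
-/

open MeasureTheory

/-- The Alexander–Spanier coboundary for the constant kernel `K ≡ 1`. -/
noncomputable def coboundary1 {X : Type*} (n : ℕ) (f : (Fin n → X) → ℝ) :
    (Fin (n + 1) → X) → ℝ :=
  fun x => ∑ i : Fin (n + 1), (-1 : ℝ) ^ (i : ℕ) * f (x ∘ i.succAbove)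

/-- The boundary operator `∂ = δ*` for `K ≡ 1`. -/
noncomputable def boundary0 {X : Type*} [MeasurableSpace X] (μ : Measure X)
    (n : ℕ) (g : (Fin (n + 1) → X) → ℝ) : (Fin n → X) → ℝ :=
  fun x => ∑ i : Fin (n + 1),
    (-1 : ℝ) ^ (i : ℕ) * ∫ t, g (i.insertNth t x) ∂μ

namespace Fin

variable {m : ℕ}

lemma val_add_val_succAbove (i : Fin (m + 2)) (k : Fin (m + 1)) :
    (i : ℕ) + i.succAbove k = k + k.predAbove i + 1 := by
  simp only [succAbove, predAbove, lt_def, val_castSucc, apply_dite Fin.val, val_pred,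
    coe_castPred, dite_eq_ite, apply_ite Fin.val, val_succ]
  split_ifs <;> omega

lemma neg_one_pow_add_succAbove (i : Fin (m + 2)) (k : Fin (m + 1)) :
    (-1 : ℝ) ^ ((i : ℕ) + i.succAbove k) = -(-1) ^ ((k : ℕ) + k.predAbove i) := by
  rw [val_add_val_succAbove, pow_succ, mul_neg_one]

lemma sum_comp_predAbove {M : Type*} [AddCommMonoid M] (k : Fin (m + 1))
    (g : Fin (m + 1) → M) :
    ∑ i : Fin (m + 2), g (k.predAbove i) = g k + ∑ b, g b := by
  rw [sum_univ_succAbove _ k.castSucc]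
  simp only [predAbove_succAbove, predAbove_castSucc_self]

lemma removeNth_succAbove_insertNth {X : Type*} (i : Fin (m + 2)) (k : Fin (m + 1)) (t : X)
    (x : Fin (m + 1) → X) :
    removeNth (α := fun _ ↦ X) (i.succAbove k) (i.insertNth t x) =
      insertNth (α := fun _ ↦ X) (k.predAbove i) t (k.removeNth x) := by
  funext j
  refine succAboveCases (k.predAbove i) ?_ (fun j ↦ ?_) j
  · simp only [removeNth, succAbove_succAbove_predAbove, insertNth_apply_same]
  · simp only [removeNth, succAbove_succAbove_succAbove_predAbove, insertNth_apply_succAbove]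

end Fin

lemma coboundary1_insertNth {X : Type*} {m : ℕ} (u : (Fin (m + 1) → X) → ℝ)
    (i : Fin (m + 2)) (t : X) (x : Fin (m + 1) → X) :
    coboundary1 (m + 1) u (i.insertNth t x) = (-1) ^ (i : ℕ) * u x +
      ∑ c : Fin (m + 1),
        (-1) ^ (i.succAbove c : ℕ) * u ((c.predAbove i).insertNth t (c.removeNth x)) := by
  unfold coboundary1
  rw [Fin.sum_univ_succAbove _ i, Fin.insertNth_comp_succAbove]
  congr 2 with c
  rw [← Fin.removeNth_succAbove_insertNth]
  rfl

section CoordAverage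

variable {X : Type*} [MeasurableSpace X] (μ : Measure X) {m : ℕ}

noncomputable def coordAverage (a : Fin m) (u : (Fin m → X) → ℝ) (x : Fin m → X) : ℝ :=
  ∫ t, u (Function.update x a t) ∂μ

variable [IsProbabilityMeasure μ]

lemma measurePreserving_removeNth (a : Fin (m + 1)) :
    MeasurePreserving (Fin.removeNth (α := fun _ ↦ X) a)
      (Measure.pi fun _ ↦ μ) (Measure.pi fun _ ↦ μ) :=
  measurePreserving_snd.comp (measurePreserving_piFinSuccAbove (fun _ ↦ μ) a)

lemma measurePreserving_insertNth (b : Fin (m + 1)) :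
    MeasurePreserving (fun p : (Fin m → X) × X ↦ b.insertNth p.2 p.1)
      ((Measure.pi fun _ ↦ μ).prod μ) (Measure.pi fun _ ↦ μ) := by
  convert (measurePreserving_piFinSuccAbove (fun _ ↦ μ) b).symm.comp
    Measure.measurePreserving_swap using 1
  funext p
  simp [MeasurableEquiv.piFinSuccAbove_symm_apply, Fin.insertNthEquiv]

lemma measurePreserving_insertNth_removeNth (a b : Fin (m + 1)) :
    MeasurePreserving (fun p : (Fin (m + 1) → X) × X ↦ b.insertNth p.2 (a.removeNth p.1))
      ((Measure.pi fun _ ↦ μ).prod μ) (Measure.pi fun _ ↦ μ) :=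
  (measurePreserving_insertNth μ b).comp
    ((measurePreserving_removeNth μ a).prod (MeasurePreserving.id μ))

lemma measurePreserving_update (a : Fin (m + 1)) :
    MeasurePreserving (fun p : (Fin (m + 1) → X) × X ↦ Function.update p.1 a p.2)
      ((Measure.pi fun _ ↦ μ).prod μ) (Measure.pi fun _ ↦ μ) := by
  simpa using measurePreserving_insertNth_removeNth μ a a

variable {μ} {u : (Fin (m + 1) → X) → ℝ}

lemma MeasureTheory.Integrable.ae_integrable_insertNth_removeNth
    (hu : Integrable u (Measure.pi fun _ ↦ μ)) (a b : Fin (m + 1)) :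
    ∀ᵐ x ∂Measure.pi fun _ ↦ μ, Integrable (fun t ↦ u (b.insertNth t (a.removeNth x))) μ :=
  ((measurePreserving_insertNth_removeNth μ a b).integrable_comp_of_integrable hu).prod_right_ae

lemma MeasureTheory.Integrable.ae_integrable_update (hu : Integrable u (Measure.pi fun _ ↦ μ))
    (a : Fin (m + 1)) :
    ∀ᵐ x ∂Measure.pi fun _ ↦ μ, Integrable (fun t ↦ u (Function.update x a t)) μ := by
  simpa using hu.ae_integrable_insertNth_removeNth a a

lemma MeasureTheory.Integrable.coordAverage (hu : Integrable u (Measure.pi fun _ ↦ μ))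
    (a : Fin (m + 1)) :
    Integrable (coordAverage μ a u) (Measure.pi fun _ ↦ μ) :=
  ((measurePreserving_update μ a).integrable_comp_of_integrable hu).integral_prod_left

lemma integral_coordAverage (hu : Integrable u (Measure.pi fun _ ↦ μ)) (a : Fin (m + 1)) :
    ∫ x, coordAverage μ a u x ∂(Measure.pi fun _ ↦ μ) = ∫ x, u x ∂(Measure.pi fun _ ↦ μ) := by
  have hφ := measurePreserving_update μ a
  unfold coordAverage
  rw [integral_integral (f := fun x t ↦ u (Function.update x a t))
    (hφ.integrable_comp_of_integrable hu)]
  rw [← hφ.map_eq] at hu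
  rw [← integral_map hφ.measurable.aemeasurable hu.aestronglyMeasurable, hφ.map_eq]

end CoordAverage

section Laplacian

variable {X : Type*} [MeasurableSpace X] (μ : Measure X)

noncomputable def laplacian1 (m : ℕ) (u : (Fin (m + 1) → X) → ℝ) : (Fin (m + 1) → X) → ℝ :=
  fun x ↦ boundary0 μ (m + 1) (coboundary1 (m + 1) u) x + coboundary1 m (boundary0 μ m u) x

variable {m : ℕ}

lemma coboundary1_boundary0_apply (u : (Fin (m + 1) → X) → ℝ) (x : Fin (m + 1) → X) :
    coboundary1 m (boundary0 μ m u) x =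
      ∑ a : Fin (m + 1), ∑ b : Fin (m + 1),
        (-1) ^ ((a : ℕ) + b) * ∫ t, u (b.insertNth t (a.removeNth x)) ∂μ := by
  unfold coboundary1 boundary0
  simp_rw [Finset.mul_sum, pow_add, mul_assoc]
  rfl

variable [IsProbabilityMeasure μ]

lemma integral_coboundary1_insertNth {u : (Fin (m + 1) → X) → ℝ} {x : Fin (m + 1) → X}
    (hx : ∀ a b : Fin (m + 1), Integrable (fun t ↦ u (b.insertNth t (a.removeNth x))) μ)
    (i : Fin (m + 2)) :
    ∫ t, coboundary1 (m + 1) u (i.insertNth t x) ∂μ = (-1) ^ (i : ℕ) * u x +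
      ∑ c : Fin (m + 1), (-1) ^ (i.succAbove c : ℕ) *
        ∫ t, u ((c.predAbove i).insertNth t (c.removeNth x)) ∂μ := by
  simp_rw [coboundary1_insertNth]
  rw [integral_add (integrable_const _)
      (integrable_finsetSum _ fun c _ ↦ (hx c _).const_mul _),
    integral_finsetSum _ fun c _ ↦ (hx c _).const_mul _]
  simp only [integral_const, probReal_univ, one_smul, integral_const_mul]

lemma boundary0_coboundary1_apply {u : (Fin (m + 1) → X) → ℝ} {x : Fin (m + 1) → X}
    (hx : ∀ a b : Fin (m + 1), Integrable (fun t ↦ u (b.insertNth t (a.removeNth x))) μ) :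
    boundary0 μ (m + 1) (coboundary1 (m + 1) u) x = (m + 2) * u x -
      ∑ a : Fin (m + 1), (coordAverage μ a u x +
        ∑ b : Fin (m + 1),
          (-1) ^ ((a : ℕ) + b) * ∫ t, u (b.insertNth t (a.removeNth x)) ∂μ) := by
  set J : Fin (m + 1) → Fin (m + 1) → ℝ :=
    fun a b ↦ ∫ t, u (b.insertNth t (a.removeNth x)) ∂μ
  have hJ : ∀ a, J a a = coordAverage μ a u x := fun a ↦ by simp [J, coordAverage]
  calc boundary0 μ (m + 1) (coboundary1 (m + 1) u) x
      = ∑ i : Fin (m + 2),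
          (u x - ∑ c : Fin (m + 1), (-1) ^ ((c : ℕ) + c.predAbove i) * J c (c.predAbove i)) := by
        refine Finset.sum_congr rfl fun i _ ↦ ?_
        rw [integral_coboundary1_insertNth μ hx, mul_add, ← mul_assoc, ← pow_add,
          (Even.add_self _).neg_one_pow, one_mul, Finset.mul_sum, sub_eq_add_neg,
          ← Finset.sum_neg_distrib]
        refine congrArg _ (Finset.sum_congr rfl fun c _ ↦ ?_)
        rw [← mul_assoc, ← pow_add, Fin.neg_one_pow_add_succAbove, neg_mul]
    _ = (m + 2) * u x - ∑ c : Fin (m + 1), ∑ i : Fin (m + 2),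
          (-1) ^ ((c : ℕ) + c.predAbove i) * J c (c.predAbove i) := by
        rw [Finset.sum_sub_distrib, Finset.sum_comm]
        simp
    _ = _ := by
        refine congrArg _ (Finset.sum_congr rfl fun c _ ↦ ?_)
        rw [Fin.sum_comp_predAbove c (fun b ↦ (-1) ^ ((c : ℕ) + b) * J c b),
          (Even.add_self _).neg_one_pow, one_mul, hJ]

lemma laplacian1_ae_eq {u : (Fin (m + 1) → X) → ℝ} (hu : Integrable u (Measure.pi fun _ ↦ μ)) :
    laplacian1 μ m u =ᵐ[Measure.pi fun _ ↦ μ]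
      fun x ↦ (m + 2) * u x - ∑ a, coordAverage μ a u x := by
  have hslices : ∀ᵐ x ∂(Measure.pi fun _ ↦ μ),
      ∀ a b : Fin (m + 1), Integrable (fun t ↦ u (b.insertNth t (a.removeNth x))) μ := by
    simp only [ae_all_iff]
    exact hu.ae_integrable_insertNth_removeNth
  filter_upwards [hslices] with x hx
  rw [laplacian1, boundary0_coboundary1_apply μ hx, coboundary1_boundary0_apply,
    Finset.sum_add_distrib]
  ring

end Laplacian

section Uniqueness

variable {X : Type*} [MeasurableSpace X] {μ : Measure X} [IsProbabilityMeasure μ] {m : ℕ}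

lemma ae_eq_zero_of_mul_eq_sum_coordAverage {w : (Fin (m + 1) → X) → ℝ}
    (hw : Integrable w (Measure.pi fun _ ↦ μ))
    (h : ∀ᵐ x ∂(Measure.pi fun _ ↦ μ), (m + 2) * w x = ∑ a, coordAverage μ a w x) :
    w =ᵐ[Measure.pi fun _ ↦ μ] 0 := by
  set I := ∫ x, |w x| ∂(Measure.pi fun _ ↦ μ)
  have hI : (m + 2) * I ≤ (m + 1) * I :=
    calc (m + 2) * I = ∫ x, |(m + 2) * w x| ∂(Measure.pi fun _ ↦ μ) := by
          rw [← integral_const_mul]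
          simp_rw [abs_mul, abs_of_pos (by positivity : (0 : ℝ) < m + 2)]
      _ ≤ ∫ x, ∑ a, coordAverage μ a (fun y ↦ |w y|) x ∂(Measure.pi fun _ ↦ μ) := by
          refine integral_mono_ae (hw.const_mul _).abs
            (integrable_finsetSum _ fun a _ ↦ hw.abs.coordAverage a) ?_
          filter_upwards [h] with x hx
          rw [hx]
          exact (Finset.abs_sum_le_sum_abs _ _).trans
            (Finset.sum_le_sum fun a _ ↦ abs_integral_le_integral_abs)
      _ = (m + 1) * I := by
          rw [integral_finsetSum _ fun a _ ↦ hw.abs.coordAverage a]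
          simp [integral_coordAverage hw.abs, I]
  have hI0 : I = 0 := le_antisymm (by linarith) (integral_nonneg fun x ↦ abs_nonneg _)
  filter_upwards [(integral_eq_zero_iff_of_nonneg (fun x ↦ abs_nonneg _) hw.abs).mp hI0]
    with x hx
  simpa using hx

lemma ae_eq_of_mul_eq_add_sum_coordAverage {f u v : (Fin (m + 1) → X) → ℝ}
    (hu : Integrable u (Measure.pi fun _ ↦ μ)) (hv : Integrable v (Measure.pi fun _ ↦ μ))
    (hfu : ∀ᵐ x ∂(Measure.pi fun _ ↦ μ), (m + 2) * u x = f x + ∑ a, coordAverage μ a u x)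
    (hfv : ∀ᵐ x ∂(Measure.pi fun _ ↦ μ), (m + 2) * v x = f x + ∑ a, coordAverage μ a v x) :
    u =ᵐ[Measure.pi fun _ ↦ μ] v := by
  have hslices : ∀ᵐ x ∂(Measure.pi fun _ ↦ μ), ∀ a,
      Integrable (fun t ↦ u (Function.update x a t)) μ ∧
        Integrable (fun t ↦ v (Function.update x a t)) μ := by
    simp only [ae_all_iff, Filter.eventually_and]
    exact fun a ↦ ⟨hu.ae_integrable_update a, hv.ae_integrable_update a⟩
  have hdiff : ∀ᵐ x ∂(Measure.pi fun _ ↦ μ),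
      (m + 2) * (u - v) x = ∑ a, coordAverage μ a (u - v) x := by
    filter_upwards [hfu, hfv, hslices] with x hux hvx hx
    have hsub : ∀ a, coordAverage μ a (u - v) x = coordAverage μ a u x - coordAverage μ a v x :=
      fun a ↦ integral_sub (hx a).1 (hx a).2
    simp only [Pi.sub_apply, hsub, Finset.sum_sub_distrib]
    linarith
  filter_upwards [ae_eq_zero_of_mul_eq_sum_coordAverage (hu.sub hv) hdiff] with x hx
  exact sub_eq_zero.mp hx

end Uniqueness

section FixedPoint

open scoped BoundedContinuousFunction NNReal

variable {X : Type*} [TopologicalSpace X] [MeasurableSpace X] (μ : Measure X)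
  [IsProbabilityMeasure μ] {m : ℕ}

lemma norm_coordAverage_le (a : Fin m) (v : (Fin m → X) →ᵇ ℝ) (x : Fin m → X) :
    ‖coordAverage μ a v x‖ ≤ ‖v‖ := by
  simpa [coordAverage] using norm_integral_le_of_norm_le_const (μ := μ) (ae_of_all _ fun t ↦
    v.norm_coe_le_norm (Function.update x a t))

variable [OpensMeasurableSpace X]

lemma integrable_comp_update (v : (Fin m → X) →ᵇ ℝ) (x : Fin m → X) (a : Fin m) :
    Integrable (fun t ↦ v (Function.update x a t)) μ :=
  (v.compContinuous ⟨_, continuous_const.update a continuous_id⟩).integrable μ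

lemma dist_coordAverage_le (a : Fin m) (v w : (Fin m → X) →ᵇ ℝ) (x : Fin m → X) :
    dist (coordAverage μ a v x) (coordAverage μ a w x) ≤ dist v w := by
  rw [dist_eq_norm, coordAverage, coordAverage,
    ← integral_sub (integrable_comp_update μ v x a) (integrable_comp_update μ w x a)]
  simpa using norm_integral_le_of_norm_le_const (μ := μ) (ae_of_all _ fun t ↦
    (dist_eq_norm _ _).symm.trans_le (v.dist_coe_le_dist (Function.update x a t)))

variable [FirstCountableTopology X]

lemma continuous_coordAverage (a : Fin m) (v : (Fin m → X) →ᵇ ℝ) :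
    Continuous (coordAverage μ a v) :=
  continuous_of_dominated (fun x ↦ (integrable_comp_update μ v x a).aestronglyMeasurable)
    (fun _ ↦ ae_of_all _ fun _ ↦ v.norm_coe_le_norm _) (integrable_const ‖v‖)
    (ae_of_all _ fun _ ↦ v.continuous.comp (continuous_id.update a continuous_const))

namespace BoundedContinuousFunction

noncomputable def coordAverage (a : Fin m) (v : (Fin m → X) →ᵇ ℝ) : (Fin m → X) →ᵇ ℝ :=
  ofNormedAddCommGroup _ (continuous_coordAverage μ a v) ‖v‖ (norm_coordAverage_le μ a v)

lemma dist_coordAverage_coordAverage_le (a : Fin m) (v w : (Fin m → X) →ᵇ ℝ) :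
    dist (v.coordAverage μ a) (w.coordAverage μ a) ≤ dist v w :=
  (dist_le dist_nonneg).mpr (dist_coordAverage_le μ a v w)

noncomputable def poissonIteration (f v : (Fin m → X) →ᵇ ℝ) : (Fin m → X) →ᵇ ℝ :=
  ((m : ℝ) + 1)⁻¹ • (f + ∑ a, v.coordAverage μ a)

lemma dist_poissonIteration_le (f v w : (Fin m → X) →ᵇ ℝ) :
    dist (poissonIteration μ f v) (poissonIteration μ f w) ≤ m / (m + 1) * dist v w := by
  have hsum : dist (∑ a, v.coordAverage μ a) (∑ a, w.coordAverage μ a) ≤ m * dist v w := by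
    simpa using dist_sum_sum_le_of_le Finset.univ fun a _ ↦
      dist_coordAverage_coordAverage_le μ a v w
  refine (dist_smul₀ ((m : ℝ) + 1)⁻¹ (f + ∑ a, v.coordAverage μ a) _).trans_le ?_
  rw [dist_add_left, norm_inv, Real.norm_of_nonneg (by positivity), div_eq_inv_mul, mul_assoc]
  gcongr

lemma exists_fixedPoint_poissonIteration (f : (Fin m → X) →ᵇ ℝ) :
    ∃ v, poissonIteration μ f v = v := by
  have hK : (m / (m + 1) : ℝ≥0) < 1 := (div_lt_one (by positivity)).mpr (lt_add_one _)
  have hcontr : ContractingWith (m / (m + 1)) (poissonIteration μ f) :=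
    ⟨hK, LipschitzWith.of_dist_le_mul fun v w ↦ by
      simpa using dist_poissonIteration_le μ f v w⟩
  exact ⟨_, hcontr.fixedPoint_isFixedPt⟩

end BoundedContinuousFunction

lemma exists_boundedContinuous_mul_eq_add_sum_coordAverage (f : (Fin m → X) →ᵇ ℝ) :
    ∃ v : (Fin m → X) →ᵇ ℝ, ∀ x, (m + 1) * v x = f x + ∑ a, coordAverage μ a v x := by
  obtain ⟨v, hv⟩ := BoundedContinuousFunction.exists_fixedPoint_poissonIteration μ f
  refine ⟨v, fun x ↦ ?_⟩
  have hx := congrArg (· x) hv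
  simp only [BoundedContinuousFunction.poissonIteration, BoundedContinuousFunction.coe_smul,
    BoundedContinuousFunction.coe_add, BoundedContinuousFunction.coe_sum] at hx
  rw [← hx, smul_eq_mul, ← mul_assoc, mul_inv_cancel₀ (by positivity), one_mul,
    Pi.add_apply, Finset.sum_apply]
  rfl

end FixedPoint

theorem poisson_regularity_general
    {X : Type*} [MetricSpace X]
    [TopologicalSpace.SeparableSpace X]
    [MeasurableSpace X] [BorelSpace X]
    (μ : Measure X) [IsProbabilityMeasure μ]
    (n : ℕ) (u f : (Fin (n + 2) → X) → ℝ)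
    (hu : MemLp u 2 (Measure.pi fun _ : Fin (n + 2) => μ))
    (hf_cont : Continuous f)
    (hf_bdd : ∃ C : ℝ, ∀ x, |f x| ≤ C)
    (hpoisson : (fun x => boundary0 μ (n + 2) (coboundary1 (n + 2) u) x +
        coboundary1 (n + 1) (boundary0 μ (n + 1) u) x)
      =ᵐ[Measure.pi fun _ : Fin (n + 2) => μ] f) :
    ∃ v : (Fin (n + 2) → X) → ℝ, Continuous v ∧ (∃ C : ℝ, ∀ x, |v x| ≤ C) ∧
      u =ᵐ[Measure.pi fun _ : Fin (n + 2) => μ] v := by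
  have : SecondCountableTopology X := UniformSpace.secondCountable_of_separable X
  obtain ⟨C, hC⟩ := hf_bdd
  obtain ⟨v, hv⟩ := exists_boundedContinuous_mul_eq_add_sum_coordAverage μ
    (.ofNormedAddCommGroup f hf_cont C hC)
  simp only [BoundedContinuousFunction.coe_ofNormedAddCommGroup] at hv
  have hu₁ : Integrable u (Measure.pi fun _ ↦ μ) := hu.integrable one_le_two
  refine ⟨v, v.continuous, ⟨‖v‖, v.norm_coe_le_norm⟩,
    ae_eq_of_mul_eq_add_sum_coordAverage (f := f) hu₁ (v.integrable _) ?_ (ae_of_all _ fun x ↦ ?_)⟩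
  · filter_upwards [laplacian1_ae_eq μ hu₁, hpoisson] with x hΔ hx
    simp only [laplacian1] at hΔ
    push_cast at hΔ ⊢
    linarith
  · convert hv x using 2
    push_cast
    ring

/-- Poisson regularity on the whole space, `K ≡ 1`: if
`Δu = f` with `u ∈ L²_a(X^{ℓ+1})` and `f` continuous, bounded, alternating
and in `L²`, then `u` is (a.e. equal to a function that is) continuous and
bounded.  Here `ℓ = n + 1` and `Δ = ∂δ + δ∂`. -/
theorem poisson_regularity
    {X : Type*} [MetricSpace X] [CompleteSpace X]
    [TopologicalSpace.SeparableSpace X]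
    [MeasurableSpace X] [BorelSpace X]
    (μ : Measure X) [IsProbabilityMeasure μ]
    (hμpos : ∀ U : Set X, IsOpen U → U.Nonempty → 0 < μ U)
    (n : ℕ) (u f : (Fin (n + 2) → X) → ℝ)
    (hu_alt : ∀ (σ : Equiv.Perm (Fin (n + 2))) (x : Fin (n + 2) → X),
      u (x ∘ σ) = ((Equiv.Perm.sign σ : ℤ) : ℝ) * u x)
    (hu : MemLp u 2 (Measure.pi fun _ : Fin (n + 2) => μ))
    (hf_cont : Continuous f)
    (hf_bdd : ∃ C : ℝ, ∀ x, |f x| ≤ C)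
    (hf_alt : ∀ (σ : Equiv.Perm (Fin (n + 2))) (x : Fin (n + 2) → X),
      f (x ∘ σ) = ((Equiv.Perm.sign σ : ℤ) : ℝ) * f x)
    (hf : MemLp f 2 (Measure.pi fun _ : Fin (n + 2) => μ))
    (hpoisson : (fun x => boundary0 μ (n + 2) (coboundary1 (n + 2) u) x +
        coboundary1 (n + 1) (boundary0 μ (n + 1) u) x)
      =ᵐ[Measure.pi fun _ : Fin (n + 2) => μ] f) :
    ∃ v : (Fin (n + 2) → X) → ℝ, Continuous v ∧ (∃ C : ℝ, ∀ x, |v x| ≤ C) ∧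
      u =ᵐ[Measure.pi fun _ : Fin (n + 2) => μ] v :=
  poisson_regularity_general μ n u f hu hf_cont hf_bdd hpoisson
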